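/- Let (Π,Γ,α,l) : I → ℝ³ × ℝ³ × ℝ × ℝ be differentiable on an open interval I and solve the reduced spacecraft–rotor equations with non-coincident centers: Π′(t) = Π(t) × Ω(Π(t),l(t)) + g·h·(Γ(t) × χ), Γ′(t) = Γ(t) × Ω(Π(t),l(t)), α′(t) = −(Π₃(t) − l(t))/Ī₃ + l(t)/J₃, l′(t) = 0. Then for every continuously differentiable F : ℝ³ × ℝ³ × ℝ × ℝ → ℝ, the derivative d/dt F(Π(t),Γ(t),α(t),l(t)) equals {F, H}₋(Π(t),Γ(t),α(t),l(t)) for all t ∈ I, where H(Π,Γ,α,l) = (1/2)[Π₁²/Ī₁ + Π₂²/Ī₂ + (Π₃ − l)²/Ī₃ + l²/J₃] + g·h·(Γ · χ) (independent of α). That is, the reduced equations are Hamiltonian with respect to the minus heavy-top Lie–Poisson bracket. -/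

import Mathlib

/-!
Write `X_K = (Π × ∇_Π K + Γ × ∇_Γ K, Γ × ∇_Π K, ∂K/∂l, -∂K/∂α)`. Cyclically permuting the triple
products in `{F, K}₋` shows `{F, K}₋ = dF(X_K)` for every `K`. For the Hamiltonian `H`,
`∇_Π H = Ω`, `∇_Γ H = g h χ`, `∂H/∂α = 0` and `∂H/∂l = -(Π₃ - l)/Ī₃ + l/J₃`, so `X_H` is the right-hand
side of the reduced equations, and the chain rule gives `d/dt F = dF(X_H) = {F, H}₋`.
-/

open Matrix

open Matrix

/-- Gradient in the `Π`-variables of a function on `𝔰𝔢*(3) × ℝ × ℝ* ≅ ℝ³ × ℝ³ × ℝ × ℝ`. -/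
noncomputable def gradPi (F : (Fin 3 → ℝ) × (Fin 3 → ℝ) × ℝ × ℝ → ℝ)
    (p : (Fin 3 → ℝ) × (Fin 3 → ℝ) × ℝ × ℝ) : Fin 3 → ℝ :=
  fun i => fderiv ℝ F p (Pi.single i 1, 0, 0, 0)

/-- Gradient in the `Γ`-variables. -/
noncomputable def gradGamma (F : (Fin 3 → ℝ) × (Fin 3 → ℝ) × ℝ × ℝ → ℝ)
    (p : (Fin 3 → ℝ) × (Fin 3 → ℝ) × ℝ × ℝ) : Fin 3 → ℝ :=
  fun i => fderiv ℝ F p (0, Pi.single i 1, 0, 0)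

/-- Partial derivative with respect to `α`. -/
noncomputable def dAlpha (F : (Fin 3 → ℝ) × (Fin 3 → ℝ) × ℝ × ℝ → ℝ)
    (p : (Fin 3 → ℝ) × (Fin 3 → ℝ) × ℝ × ℝ) : ℝ :=
  fderiv ℝ F p (0, 0, 1, 0)

/-- Partial derivative with respect to `l`. -/
noncomputable def dEll (F : (Fin 3 → ℝ) × (Fin 3 → ℝ) × ℝ × ℝ → ℝ)
    (p : (Fin 3 → ℝ) × (Fin 3 → ℝ) × ℝ × ℝ) : ℝ :=
  fderiv ℝ F p (0, 0, 0, 1)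

/-- The minus heavy-top Lie–Poisson bracket on `𝔰𝔢*(3) × ℝ × ℝ*`:
`{F,K}₋ = −Π·(∇_Π F × ∇_Π K) − Γ·(∇_Π F × ∇_Γ K − ∇_Π K × ∇_Γ F)
          + (∂F/∂α)(∂K/∂l) − (∂K/∂α)(∂F/∂l)`. -/
noncomputable def bracket (F K : (Fin 3 → ℝ) × (Fin 3 → ℝ) × ℝ × ℝ → ℝ)
    (p : (Fin 3 → ℝ) × (Fin 3 → ℝ) × ℝ × ℝ) : ℝ :=
  -(p.1 ⬝ᵥ crossProduct (gradPi F p) (gradPi K p))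
    - (p.2.1 ⬝ᵥ (crossProduct (gradPi F p) (gradGamma K p)
        - crossProduct (gradPi K p) (gradGamma F p)))
    + dAlpha F p * dEll K p - dAlpha K p * dEll F p


/-- The body angular velocity `Ω(Π,l) = (Π₁/Ī₁, Π₂/Ī₂, (Π₃ − l)/Ī₃)`. -/
noncomputable def Om (I1 I2 I3 : ℝ) (P : Fin 3 → ℝ) (l : ℝ) : Fin 3 → ℝ :=
  ![P 0 / I1, P 1 / I2, (P 2 - l) / I3]

/-- Reduced Hamiltonian of the spacecraft–rotor system with non-coincident centers,
viewed as a function of `(Π,Γ,α,l)` (independent of `α`). -/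
noncomputable def Ham (I1 I2 I3 J3 g h : ℝ) (χ : Fin 3 → ℝ)
    (p : (Fin 3 → ℝ) × (Fin 3 → ℝ) × ℝ × ℝ) : ℝ :=
  (1/2) * ((p.1 0)^2 / I1 + (p.1 1)^2 / I2 + (p.1 2 - p.2.2.2)^2 / I3
      + p.2.2.2^2 / J3)
    + g * h * (p.2.1 ⬝ᵥ χ)

section PoissonBracket

abbrev PhaseSpace := (Fin 3 → ℝ) × (Fin 3 → ℝ) × ℝ × ℝ

variable (F K : PhaseSpace → ℝ) (p : PhaseSpace)

lemma fderiv_apply_eq_partials (v w : Fin 3 → ℝ) (c d : ℝ) :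
    fderiv ℝ F p (v, w, c, d)
      = gradPi F p ⬝ᵥ v + gradGamma F p ⬝ᵥ w + dAlpha F p * c + dEll F p * d := by
  have hv : (v, w, c, d)
      = ∑ i, v i • ((Pi.single i 1 : Fin 3 → ℝ), (0 : Fin 3 → ℝ), (0 : ℝ), (0 : ℝ))
        + ∑ i, w i • ((0 : Fin 3 → ℝ), (Pi.single i 1 : Fin 3 → ℝ), (0 : ℝ), (0 : ℝ))
        + c • ((0 : Fin 3 → ℝ), (0 : Fin 3 → ℝ), (1 : ℝ), (0 : ℝ))
        + d • ((0 : Fin 3 → ℝ), (0 : Fin 3 → ℝ), (0 : ℝ), (1 : ℝ)) := by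
    ext i <;> simp [Prod.fst_sum, Prod.snd_sum, Finset.sum_apply, Pi.single_apply]
  rw [hv]
  simp only [map_add, map_sum, map_smul, smul_eq_mul, gradPi, gradGamma, dAlpha, dEll,
    dotProduct, mul_comm]

noncomputable def hamiltonianVectorField : PhaseSpace :=
  (p.1 ⨯₃ gradPi K p + p.2.1 ⨯₃ gradGamma K p, p.2.1 ⨯₃ gradPi K p, dEll K p, -dAlpha K p)

theorem bracket_eq_fderiv_hamiltonianVectorField :
    bracket F K p = fderiv ℝ F p (hamiltonianVectorField K p) := by
  simp only [hamiltonianVectorField, fderiv_apply_eq_partials, bracket, dotProduct_add,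
    dotProduct_sub]
  rw [triple_product_permutation p.1, triple_product_permutation p.2.1 (gradPi F p),
    ← triple_product_permutation (gradGamma F p) p.2.1 (gradPi K p),
    ← cross_anticomm p.1 (gradPi K p), ← cross_anticomm p.2.1 (gradGamma K p)]
  simp only [dotProduct_neg]
  ring

end PoissonBracket

section Hamiltonian

variable (I1 I2 I3 J3 g h : ℝ) (χ : Fin 3 → ℝ) (p : PhaseSpace)

lemma fderiv_Ham_apply (v : PhaseSpace) :
    fderiv ℝ (Ham I1 I2 I3 J3 g h χ) p v
      = Om I1 I2 I3 p.1 p.2.2.2 ⬝ᵥ v.1 + (g * h) * (χ ⬝ᵥ v.2.1)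
        + (-(p.1 2 - p.2.2.2) / I3 + p.2.2.2 / J3) * v.2.2.2 := by
  let fstL := ContinuousLinearMap.fst ℝ (Fin 3 → ℝ) ((Fin 3 → ℝ) × ℝ × ℝ)
  let sndL := ContinuousLinearMap.snd ℝ (Fin 3 → ℝ) ((Fin 3 → ℝ) × ℝ × ℝ)
  have hP (i : Fin 3) := ((ContinuousLinearMap.proj i).comp fstL).hasFDerivAt (x := p)
  have hl := ((ContinuousLinearMap.snd ℝ ℝ ℝ).comp
    ((ContinuousLinearMap.snd ℝ (Fin 3 → ℝ) _).comp sndL)).hasFDerivAt (x := p)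
  have hχ := ((LinearMap.toContinuousLinearMap ((dotProductBilin ℝ ℝ).flip χ)).comp
    ((ContinuousLinearMap.fst ℝ _ _).comp sndL)).hasFDerivAt (x := p)
  -- `x / I` unfolds to `x * I⁻¹`, so this derivative is one of `Ham` up to unfolding.
  have hHam : HasFDerivAt (Ham I1 I2 I3 J3 g h χ) _ p :=
    ((((((hP 0).pow 2).mul_const I1⁻¹).add (((hP 1).pow 2).mul_const I2⁻¹)).add
      ((((hP 2).sub hl).pow 2).mul_const I3⁻¹)).add ((hl.pow 2).mul_const J3⁻¹)
      |>.const_mul (1 / 2 : ℝ)).add (hχ.const_mul (g * h))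
  rw [hHam.fderiv]
  simp only [fstL, sndL, ContinuousLinearMap.comp_apply, ContinuousLinearMap.coe_fst',
    ContinuousLinearMap.coe_snd', ContinuousLinearMap.proj_apply, _root_.add_apply,
    _root_.smul_apply, _root_.sub_apply,
    LinearMap.coe_toContinuousLinearMap', LinearMap.flip_apply, dotProductBilin_apply_apply,
    Pi.sub_apply, smul_eq_mul, nsmul_eq_mul, dotProduct, Fin.sum_univ_three, Om,
    cons_val_zero, cons_val_one, cons_val]
  ring

lemma gradPi_Ham : gradPi (Ham I1 I2 I3 J3 g h χ) p = Om I1 I2 I3 p.1 p.2.2.2 := by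
  ext i
  simp [gradPi, fderiv_Ham_apply]

lemma gradGamma_Ham : gradGamma (Ham I1 I2 I3 J3 g h χ) p = (g * h) • χ := by
  ext i
  simp [gradGamma, fderiv_Ham_apply]

lemma dAlpha_Ham : dAlpha (Ham I1 I2 I3 J3 g h χ) p = 0 := by
  simp [dAlpha, fderiv_Ham_apply]

lemma dEll_Ham :
    dEll (Ham I1 I2 I3 J3 g h χ) p = -(p.1 2 - p.2.2.2) / I3 + p.2.2.2 / J3 := by
  simp [dEll, fderiv_Ham_apply]

lemma hamiltonianVectorField_Ham :
    hamiltonianVectorField (Ham I1 I2 I3 J3 g h χ) p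
      = (p.1 ⨯₃ Om I1 I2 I3 p.1 p.2.2.2 + (g * h) • (p.2.1 ⨯₃ χ),
          p.2.1 ⨯₃ Om I1 I2 I3 p.1 p.2.2.2, -(p.1 2 - p.2.2.2) / I3 + p.2.2.2 / J3, 0) := by
  simp [hamiltonianVectorField, gradPi_Ham, gradGamma_Ham, dAlpha_Ham, dEll_Ham]

end Hamiltonian

theorem reduced_equations_hamiltonian_noncoincident_general
    (I1 I2 I3 J3 : ℝ)
    (g h : ℝ) (χ : Fin 3 → ℝ)
    (a b : ℝ) (P Γ : ℝ → Fin 3 → ℝ) (α l : ℝ → ℝ)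
    (hP : ∀ t ∈ Set.Ioo a b,
      HasDerivAt P (crossProduct (P t) (Om I1 I2 I3 (P t) (l t))
        + (g * h) • crossProduct (Γ t) χ) t)
    (hΓ : ∀ t ∈ Set.Ioo a b,
      HasDerivAt Γ (crossProduct (Γ t) (Om I1 I2 I3 (P t) (l t))) t)
    (hα : ∀ t ∈ Set.Ioo a b,
      HasDerivAt α (-(P t 2 - l t) / I3 + l t / J3) t)
    (hl : ∀ t ∈ Set.Ioo a b, HasDerivAt l 0 t) :
    ∀ F : (Fin 3 → ℝ) × (Fin 3 → ℝ) × ℝ × ℝ → ℝ, ContDiff ℝ 1 F →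
      ∀ t ∈ Set.Ioo a b,
        HasDerivAt (fun s => F (P s, Γ s, α s, l s))
          (bracket F (Ham I1 I2 I3 J3 g h χ) (P t, Γ t, α t, l t)) t := by
  intro F hF t ht
  have hcurve := (hP t ht).prodMk ((hΓ t ht).prodMk ((hα t ht).prodMk (hl t ht)))
  have hFp := (hF.differentiable one_ne_zero (P t, Γ t, α t, l t)).hasFDerivAt
  rw [bracket_eq_fderiv_hamiltonianVectorField, hamiltonianVectorField_Ham]
  exact hFp.comp_hasDerivAt t hcurve

/-- Along any solution of the reduced spacecraft–rotor equations with non-coincident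
centers, every `C¹` function `F` evolves by `d/dt F = {F, H}₋`: the reduced
equations are Hamiltonian with respect to the minus heavy-top Lie–Poisson bracket. -/
theorem reduced_equations_hamiltonian_noncoincident
    (I1 I2 I3 J3 : ℝ) (hI1 : 0 < I1) (hI2 : 0 < I2) (hI3 : 0 < I3) (hJ3 : 0 < J3)
    (g h : ℝ) (χ : Fin 3 → ℝ) (hχ : χ ⬝ᵥ χ = 1)
    (a b : ℝ) (P Γ : ℝ → Fin 3 → ℝ) (α l : ℝ → ℝ)
    (hP : ∀ t ∈ Set.Ioo a b,
      HasDerivAt P (crossProduct (P t) (Om I1 I2 I3 (P t) (l t))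
        + (g * h) • crossProduct (Γ t) χ) t)
    (hΓ : ∀ t ∈ Set.Ioo a b,
      HasDerivAt Γ (crossProduct (Γ t) (Om I1 I2 I3 (P t) (l t))) t)
    (hα : ∀ t ∈ Set.Ioo a b,
      HasDerivAt α (-(P t 2 - l t) / I3 + l t / J3) t)
    (hl : ∀ t ∈ Set.Ioo a b, HasDerivAt l 0 t) :
    ∀ F : (Fin 3 → ℝ) × (Fin 3 → ℝ) × ℝ × ℝ → ℝ, ContDiff ℝ 1 F →
      ∀ t ∈ Set.Ioo a b,
        HasDerivAt (fun s => F (P s, Γ s, α s, l s))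
          (bracket F (Ham I1 I2 I3 J3 g h χ) (P t, Γ t, α t, l t)) t :=
  reduced_equations_hamiltonian_noncoincident_general I1 I2 I3 J3 g h χ a b P Γ α l hP hΓ hα hl
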